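/- Fix T > 0, d ≥ 1, β = (β₁,…,β_d) ∈ ℝ^d with ‖β‖_∞ = max_i |β_i|, and a d×d substochastic matrix Q with zero diagonal and Qⁿ → 0, with regulator map ψ. Suppose K ∈ (0,∞) is such that ψ is K-Lipschitz with respect to the uniform metric: for all ξ, ζ ∈ ∏_{i=1}^d D[0,T], max_i sup_{t∈[0,T]} |ψ⁽ⁱ⁾(ξ)(t) − ψ⁽ⁱ⁾(ζ)(t)| ≤ K max_i sup_{t∈[0,T]} |ξ⁽ⁱ⁾(t) − ζ⁽ⁱ⁾(t)|. Let w⁽¹⁾,…,w⁽ᵈ⁾ : [0,T] → [0,T] be nondecreasing with w⁽ⁱ⁾(0)=0 and w⁽ⁱ⁾(T)=T, set ŵ(t) = max_i w⁽ⁱ⁾(t), w̌(t) = min_i w⁽ⁱ⁾(t), and ‖w − e‖_∞ = max_i sup_{t∈[0,T]} |w⁽ⁱ⁾(t) − t|. Then for every ξ with each ξ⁽ⁱ⁾ ∈ D^{β_i}[0,T], writing ξ∘w for the d-tuple with coordinates ξ⁽ⁱ⁾∘w⁽ⁱ⁾: (i) ψ(ξ∘w)(t) ≤ ψ(ξ)(w̌(t))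 + 2K‖β‖_∞‖w − e‖_∞ componentwise for all t ∈ [0,T]; and (ii) ψ(ξ)(ŵ(t)) ≤ ψ(ξ∘w)(t) + 2K‖β‖_∞‖w − e‖_∞ componentwise for all t ∈ [0,T]. -/

import Mathlib

open Set Filter

noncomputable section

/-- `f` is càdlàg on `[0,T]`: right-continuous on `[0,T)` and with left limits on `(0,T]`. -/
def Cadlag (T : ℝ) (f : ℝ → ℝ) : Prop :=
  (∀ t ∈ Set.Ico (0:ℝ) T, Filter.Tendsto f (nhdsWithin t (Set.Ici t)) (nhds (f t))) ∧
  (∀ t ∈ Set.Ioc (0:ℝ) T, ∃ L : ℝ, Filter.Tendsto f (nhdsWithin t (Set.Iio t)) (nhds L))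

/-- `lam` is a strictly increasing continuous bijection of `[0,T]` onto itself. -/
def IsTimeChange (T : ℝ) (lam : ℝ → ℝ) : Prop :=
  StrictMonoOn lam (Set.Icc 0 T) ∧ ContinuousOn lam (Set.Icc 0 T) ∧
  Set.MapsTo lam (Set.Icc 0 T) (Set.Icc 0 T) ∧
  Set.SurjOn lam (Set.Icc 0 T) (Set.Icc 0 T) ∧ lam 0 = 0 ∧ lam T = T

/-- Uniform distance of two (bounded) functions over `[0,T]`. -/
def unifDist (T : ℝ) (f g : ℝ → ℝ) : ℝ :=
  sSup {r : ℝ | ∃ t ∈ Set.Icc (0:ℝ) T, r = |f t - g t|}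

/-- The Skorokhod `J₁` distance on `[0,T]`. -/
def J1Dist (T : ℝ) (f g : ℝ → ℝ) : ℝ :=
  sInf {r : ℝ | ∃ lam : ℝ → ℝ, IsTimeChange T lam ∧
    r = max (unifDist T (fun t => f (lam t)) g) (unifDist T lam id)}

/-- The product `J₁` distance on `d`-tuples of paths. -/
def prodJ1Dist (T : ℝ) {d : ℕ} (ξ ζ : Fin d → ℝ → ℝ) : ℝ :=
  ∑ i, J1Dist T (ξ i) (ζ i)

/-- A substochastic routing matrix with zero diagonal whose powers tend to zero. -/
def Substochastic {d : ℕ} (Q : Matrix (Fin d) (Fin d) ℝ) : Prop :=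
  (∀ i j, 0 ≤ Q i j) ∧ (∀ i, Q i i = 0) ∧ (∀ i, ∑ j, Q i j ≤ 1) ∧
  Filter.Tendsto (fun n : ℕ => Q ^ n) Filter.atTop (nhds 0)

/-- The reflection matrix `𝒬 = I - Qᵀ`. -/
def refMatrix {d : ℕ} (Q : Matrix (Fin d) (Fin d) ℝ) : Matrix (Fin d) (Fin d) ℝ :=
  1 - Q.transpose

/-- `ζ` belongs to the feasible regulator set `Ψ(ξ)`: each coordinate of `ζ` is a
nondecreasing càdlàg path, nonnegative at the origin, and `ξ + 𝒬 ζ ≥ 0` on `[0,T]`. -/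
def Feasible (T : ℝ) {d : ℕ} (Q : Matrix (Fin d) (Fin d) ℝ)
    (ξ ζ : Fin d → ℝ → ℝ) : Prop :=
  (∀ i, Cadlag T (ζ i) ∧ MonotoneOn (ζ i) (Set.Icc 0 T) ∧ 0 ≤ ζ i 0) ∧
  (∀ t ∈ Set.Icc (0:ℝ) T, ∀ i, 0 ≤ ξ i t + ∑ j, refMatrix Q i j * ζ j t)

/-- The regulator map `ψ`, defined coordinatewise and pointwise as the infimum of the
feasible regulator set. -/
def regulator (T : ℝ) {d : ℕ} (Q : Matrix (Fin d) (Fin d) ℝ)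
    (ξ : Fin d → ℝ → ℝ) : Fin d → ℝ → ℝ :=
  fun i t => sInf {z : ℝ | ∃ ζ, Feasible T Q ξ ζ ∧ z = ζ i t}

/-- The content map `φ(ξ) = ξ + 𝒬 ψ(ξ)`. -/
def content (T : ℝ) {d : ℕ} (Q : Matrix (Fin d) (Fin d) ℝ)
    (ξ : Fin d → ℝ → ℝ) : Fin d → ℝ → ℝ :=
  fun i t => ξ i t + ∑ j, refMatrix Q i j * regulator T Q ξ j t

/-- `D^β[0,T]`: càdlàg paths `f` with `f 0 ≥ 0` such that `t ↦ f t - β t` is nondecreasing. -/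
def DBeta (T β : ℝ) (f : ℝ → ℝ) : Prop :=
  Cadlag T f ∧ 0 ≤ f 0 ∧ MonotoneOn (fun t => f t - β * t) (Set.Icc 0 T)

/-- `max_i sup_{t ∈ [0,T]} |ξ⁽ⁱ⁾(t) - ζ⁽ⁱ⁾(t)|`, the uniform distance of tuples of paths. -/
def supDistTuple (T : ℝ) {d : ℕ} (ξ ζ : Fin d → ℝ → ℝ) : ℝ :=
  sSup {r : ℝ | ∃ i : Fin d, ∃ t ∈ Set.Icc (0:ℝ) T, r = |ξ i t - ζ i t|}

/-- `sup_{t ∈ [0,T]} |w(t) - t|`, the uniform deviation of a time deformation from identity. -/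
def supTimeDev (T : ℝ) (w : ℝ → ℝ) : ℝ :=
  sSup {r : ℝ | ∃ t ∈ Set.Icc (0:ℝ) T, r = |w t - t|}

/-!
Both bounds are instances of one comparison. Suppose `ξ'(s) + C ≥ ξ(r)` whenever `r` lies
slightly before `s - W`. A feasible regulator for `ξ`, delayed by `W` and raised by a constant
vector `c ≥ 0` with `𝒬 c ≥ C`, is then feasible for `ξ'`, so `ψ(ξ')(t') ≤ ψ(ξ)(t) + c`
whenever `t' ≤ t + W`. For `ξ ∈ ∏ D^{β_i}` the pair `(ξ, ξ ∘ w)` satisfies this in both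
directions with `W = ‖w - e‖_∞` and `C = 2‖β‖_∞ W`, and `t - W ≤ w̌(t)`, `ŵ(t) ≤ t + W`.

For `c` we take `C` times a partial sum of the Neumann series `∑ (Qᵀ)ᵏ 1 = 𝒬⁻¹ 1`. These partial
sums are bounded by `ψ(-1)`, and the Lipschitz bound for the constant drivers `-1` and `0` gives
`ψ(-1) ≤ K`. A delayed regulator need not be right-continuous, so it is replaced by a sliding
average over a short window, which costs an arbitrarily small extra error.
-/

open intervalIntegral
open MeasureTheory (volume)
open scoped Matrix Topology

section SlidingAverage

variable {f : ℝ → ℝ} {δ s B : ℝ}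

def slidingAverage (f : ℝ → ℝ) (δ s : ℝ) : ℝ :=
  δ⁻¹ * ∫ u in (s - δ)..s, f u

theorem le_slidingAverage (hδ : 0 < δ) (hf : IntervalIntegrable f volume (s - δ) s)
    (hB : ∀ u ∈ Icc (s - δ) s, B ≤ f u) : B ≤ slidingAverage f δ s := by
  have h := integral_mono_on (by linarith) intervalIntegrable_const hf hB
  rw [integral_const, smul_eq_mul, sub_sub_cancel] at h
  rwa [slidingAverage, le_inv_mul_iff₀ hδ]

theorem slidingAverage_le (hδ : 0 < δ) (hf : IntervalIntegrable f volume (s - δ) s)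
    (hB : ∀ u ∈ Icc (s - δ) s, f u ≤ B) : slidingAverage f δ s ≤ B := by
  have h := integral_mono_on (by linarith) hf intervalIntegrable_const hB
  rw [integral_const, smul_eq_mul, sub_sub_cancel] at h
  rwa [slidingAverage, inv_mul_le_iff₀ hδ]

theorem monotone_slidingAverage (hf : Monotone f) (hδ : 0 ≤ δ) :
    Monotone (slidingAverage f δ) := by
  intro s s' hss'
  have hshift : ∫ u in (s - δ)..s, f u = ∫ u in (s' - δ)..s', f (u - (s' - s)) := by
    rw [integral_comp_sub_right f (s' - s)]
    congr 1 <;> ring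
  rw [slidingAverage, slidingAverage, hshift]
  refine mul_le_mul_of_nonneg_left (integral_mono_on (by linarith) ?_ hf.intervalIntegrable
    fun u _ => hf (by linarith)) (inv_nonneg.2 hδ)
  exact (hf.comp fun _ _ h => sub_le_sub_right h _).intervalIntegrable

theorem continuous_slidingAverage (hf : ∀ a b, IntervalIntegrable f volume a b) (δ : ℝ) :
    Continuous (slidingAverage f δ) := by
  have hF : Continuous fun b => ∫ u in (0 : ℝ)..b, f u := continuous_primitive hf 0
  have hdiff : slidingAverage f δ =
      fun s => δ⁻¹ * ((∫ u in (0 : ℝ)..s, f u) - ∫ u in (0 : ℝ)..(s - δ), f u) := by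
    ext s
    rw [slidingAverage, integral_interval_sub_left (hf _ _) (hf _ _)]
  rw [hdiff]
  exact continuous_const.mul (hF.sub (hF.comp (continuous_id.sub continuous_const)))

theorem slidingAverage_sum_mul {ι : Type*} (t : Finset ι) (a : ι → ℝ) {f : ι → ℝ → ℝ}
    (hf : ∀ k ∈ t, IntervalIntegrable (f k) volume (s - δ) s) :
    slidingAverage (fun u => ∑ k ∈ t, a k * f k u) δ s =
      ∑ k ∈ t, a k * slidingAverage (f k) δ s := by
  simp only [slidingAverage, integral_finsetSum fun k hk => (hf k hk).const_mul (a k),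
    integral_const_mul, Finset.mul_sum]
  exact Finset.sum_congr rfl fun _ _ => mul_left_comm _ _ _

end SlidingAverage

section Regulator

variable {T : ℝ} {d : ℕ} {Q : Matrix (Fin d) (Fin d) ℝ} {ξ ζ : Fin d → ℝ → ℝ} {i : Fin d}
  {t B : ℝ}

theorem Continuous.cadlag {f : ℝ → ℝ} (hf : Continuous f) : Cadlag T f :=
  ⟨fun _ _ => hf.continuousWithinAt, fun s _ => ⟨f s, hf.continuousWithinAt⟩⟩

theorem Feasible.nonneg (h : Feasible T Q ξ ζ) (i : Fin d) (ht : t ∈ Icc 0 T) : 0 ≤ ζ i t :=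
  (h.1 i).2.2.trans ((h.1 i).2.1 ⟨le_rfl, ht.1.trans ht.2⟩ ht ht.1)

theorem regulator_le (h : Feasible T Q ξ ζ) (i : Fin d) (ht : t ∈ Icc 0 T) :
    regulator T Q ξ i t ≤ ζ i t :=
  csInf_le ⟨0, by rintro _ ⟨ζ, hζ, rfl⟩; exact hζ.nonneg i ht⟩ ⟨ζ, h, rfl⟩

theorem le_regulator (hne : ∃ ζ, Feasible T Q ξ ζ) (hB : ∀ ζ, Feasible T Q ξ ζ → B ≤ ζ i t) :
    B ≤ regulator T Q ξ i t := by
  obtain ⟨ζ, hζ⟩ := hne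
  exact le_csInf ⟨_, ζ, hζ, rfl⟩ (by rintro _ ⟨ζ, hζ, rfl⟩; exact hB ζ hζ)

theorem regulator_nonneg (i : Fin d) (ht : t ∈ Icc 0 T) : 0 ≤ regulator T Q ξ i t :=
  Real.sInf_nonneg (by rintro _ ⟨ζ, hζ, rfl⟩; exact hζ.nonneg i ht)

theorem feasible_const {c : Fin d → ℝ} (hc : 0 ≤ c)
    (h : ∀ t ∈ Icc 0 T, ∀ i, 0 ≤ ξ i t + (refMatrix Q *ᵥ c) i) :
    Feasible T Q ξ fun i _ => c i :=
  ⟨fun i => ⟨continuous_const.cadlag, monotoneOn_const, hc i⟩, h⟩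

theorem regulator_zero (i : Fin d) (ht : t ∈ Icc 0 T) :
    regulator T Q (fun _ _ => 0) i t = 0 :=
  le_antisymm (regulator_le (ζ := 0) (feasible_const (c := 0) le_rfl fun _ _ _ => by simp) i ht)
    (regulator_nonneg i ht)

end Regulator

section Neumann

variable {d : ℕ} {Q : Matrix (Fin d) (Fin d) ℝ}

/-- The partial sums `∑_{k<m} (Qᵀ)ᵏ 1` of the Neumann series of `𝒬⁻¹ 1`. -/
def neumannVec (Q : Matrix (Fin d) (Fin d) ℝ) : ℕ → Fin d → ℝ
  | 0 => 0
  | m + 1 => 1 + Qᵀ *ᵥ neumannVec Q m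

theorem refMatrix_mulVec_neumannVec (m : ℕ) :
    refMatrix Q *ᵥ neumannVec Q m = 1 - (Qᵀ ^ m) *ᵥ 1 := by
  induction m with
  | zero => simp [neumannVec]
  | succ m ih =>
    have ih' : (Qᵀ ^ m) *ᵥ 1 = 1 - (neumannVec Q m - Qᵀ *ᵥ neumannVec Q m) := by
      rw [refMatrix, Matrix.sub_mulVec, Matrix.one_mulVec] at ih
      rw [ih]
      abel
    rw [neumannVec, refMatrix, Matrix.sub_mulVec, Matrix.one_mulVec, pow_succ',
      ← Matrix.mulVec_mulVec, Matrix.mulVec_add, ih', Matrix.mulVec_sub, Matrix.mulVec_sub]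
    abel

theorem monotone_mulVec_of_nonneg {m n : Type*} [Fintype n] {M : Matrix m n ℝ}
    (hM : ∀ i j, 0 ≤ M i j) :
    Monotone (M *ᵥ ·) := fun x y hxy i =>
  show ∑ j, M i j * x j ≤ ∑ j, M i j * y j from
    Finset.sum_le_sum fun j _ => mul_le_mul_of_nonneg_left (hxy j) (hM i j)

theorem neumannVec_nonneg (hQ : ∀ i j, 0 ≤ Q i j) (m : ℕ) : 0 ≤ neumannVec Q m := by
  induction m with
  | zero => exact le_rfl
  | succ m ih =>
    have h : Qᵀ *ᵥ 0 ≤ Qᵀ *ᵥ neumannVec Q m := monotone_mulVec_of_nonneg (fun i j => hQ j i) ih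
    rw [Matrix.mulVec_zero] at h
    exact add_nonneg zero_le_one h

theorem tendsto_refMatrix_mulVec_neumannVec (hQ : Tendsto (fun n => Q ^ n) atTop (𝓝 0)) :
    Tendsto (fun m => refMatrix Q *ᵥ neumannVec Q m) atTop (𝓝 1) := by
  have hcont : Continuous fun M : Matrix (Fin d) (Fin d) ℝ => Mᵀ *ᵥ (1 : Fin d → ℝ) :=
    continuous_id.matrix_transpose.matrix_mulVec continuous_const
  have hpow := (hcont.tendsto 0).comp hQ
  simp only [Function.comp_def, Matrix.transpose_pow, Matrix.transpose_zero,
    Matrix.zero_mulVec] at hpow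
  simpa [refMatrix_mulVec_neumannVec] using tendsto_const_nhds.sub hpow

theorem exists_le_refMatrix_mulVec_smul_neumannVec
    (hQ : Tendsto (fun n => Q ^ n) atTop (𝓝 0)) {C γ : ℝ} (hγ : 0 < γ) (hCγ : C < γ) :
    ∃ m, ∀ i, C ≤ (refMatrix Q *ᵥ (γ • neumannVec Q m)) i := by
  have hlt : C / γ < 1 := (div_lt_one hγ).2 hCγ
  have hev : ∀ i, ∀ᶠ m in atTop, C / γ < (refMatrix Q *ᵥ neumannVec Q m) i := fun i =>
    (tendsto_pi_nhds.1 (tendsto_refMatrix_mulVec_neumannVec hQ) i).eventually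
      (lt_mem_nhds hlt)
  obtain ⟨m, hm⟩ := (eventually_all.2 hev).exists
  refine ⟨m, fun i => ?_⟩
  rw [Matrix.mulVec_smul, Pi.smul_apply, smul_eq_mul, ← div_le_iff₀' hγ]
  exact (hm i).le

end Neumann

section LipschitzBound

variable {T : ℝ} {d : ℕ} {Q : Matrix (Fin d) (Fin d) ℝ} {ξ ζ : Fin d → ℝ → ℝ} {t K : ℝ}

theorem exists_feasible_of_forall_le (hQ : Substochastic Q) {M : ℝ} (hM : 0 ≤ M)
    (hξ : ∀ i, ∀ t ∈ Icc 0 T, -M ≤ ξ i t) : ∃ ζ, Feasible T Q ξ ζ := by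
  have hγ : 0 < M + 1 := by positivity
  obtain ⟨m, hm⟩ := exists_le_refMatrix_mulVec_smul_neumannVec hQ.2.2.2 hγ (lt_add_one M)
  exact ⟨_, feasible_const (smul_nonneg hγ.le (neumannVec_nonneg hQ.1 m))
    fun t ht i => by linarith [hξ i t ht, hm i]⟩

theorem neumannVec_le_of_feasible_neg_one (hQ : ∀ i j, 0 ≤ Q i j)
    (hζ : Feasible T Q (fun _ _ => -1) ζ) (ht : t ∈ Icc 0 T) (m : ℕ) :
    neumannVec Q m ≤ fun i => ζ i t := by
  induction m with
  | zero => exact fun i => hζ.nonneg i ht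
  | succ m ih =>
    intro i
    have hfeas : 0 ≤ -1 + (refMatrix Q *ᵥ fun j => ζ j t) i := hζ.2 t ht i
    have hmono : (Qᵀ *ᵥ neumannVec Q m) i ≤ (Qᵀ *ᵥ fun j => ζ j t) i :=
      monotone_mulVec_of_nonneg (fun i j => hQ j i) ih i
    rw [refMatrix, Matrix.sub_mulVec, Matrix.one_mulVec] at hfeas
    simp only [neumannVec, Pi.add_apply, Pi.one_apply, Pi.sub_apply] at hfeas ⊢
    linarith

theorem le_supDistTuple
    (hbdd : BddAbove {r : ℝ | ∃ i : Fin d, ∃ t ∈ Icc (0 : ℝ) T, r = |ξ i t - ζ i t|})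
    (i : Fin d) (ht : t ∈ Icc 0 T) : |ξ i t - ζ i t| ≤ supDistTuple T ξ ζ :=
  le_csSup hbdd ⟨i, t, ht, rfl⟩

theorem supDistTuple_const (hT : 0 ≤ T) [Nonempty (Fin d)] (a b : ℝ) :
    supDistTuple T (fun (_ : Fin d) _ => a) (fun _ _ => b) = |a - b| := by
  have hset : {r : ℝ | ∃ _ : Fin d, ∃ t ∈ Icc (0 : ℝ) T, r = |a - b|} = {|a - b|} := by
    ext r
    exact ⟨fun ⟨_, _, _, hr⟩ => hr, fun hr => ⟨Classical.arbitrary _, 0, ⟨le_rfl, hT⟩, hr⟩⟩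
  rw [supDistTuple, hset, csSup_singleton]

def RegulatorLipschitzWith (T : ℝ) {d : ℕ} (Q : Matrix (Fin d) (Fin d) ℝ) (K : ℝ) : Prop :=
  ∀ ξ ζ : Fin d → ℝ → ℝ, (∀ i, Cadlag T (ξ i)) → (∀ i, Cadlag T (ζ i)) →
    supDistTuple T (regulator T Q ξ) (regulator T Q ζ) ≤ K * supDistTuple T ξ ζ

theorem RegulatorLipschitzWith.regulator_neg_one_le (hLip : RegulatorLipschitzWith T Q K)
    (hT : 0 ≤ T) (hQ : Substochastic Q) (i : Fin d) (ht : t ∈ Icc 0 T) :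
    regulator T Q (fun _ _ => -1) i t ≤ K := by
  have : Nonempty (Fin d) := ⟨i⟩
  obtain ⟨ζ, hζ⟩ := exists_feasible_of_forall_le (T := T) (ξ := fun _ _ => -1) hQ zero_le_one
    fun _ _ _ => le_rfl
  obtain ⟨M, hM⟩ := Finite.bddAbove_range fun j => ζ j T
  have hbdd : BddAbove {r : ℝ | ∃ j : Fin d, ∃ s ∈ Icc (0 : ℝ) T,
      r = |regulator T Q (fun _ _ => -1) j s - regulator T Q (fun _ _ => 0) j s|} := by
    refine ⟨M, ?_⟩
    rintro _ ⟨j, s, hs, rfl⟩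
    rw [regulator_zero j hs, sub_zero, abs_of_nonneg (regulator_nonneg j hs)]
    exact (regulator_le hζ j hs).trans
      (((hζ.1 j).2.1 hs ⟨hT, le_rfl⟩ hs.2).trans (hM ⟨j, rfl⟩))
  calc regulator T Q (fun _ _ => -1) i t
      = |regulator T Q (fun _ _ => -1) i t - regulator T Q (fun _ _ => 0) i t| := by
        rw [regulator_zero i ht, sub_zero, abs_of_nonneg (regulator_nonneg i ht)]
    _ ≤ supDistTuple T (regulator T Q fun _ _ => -1) (regulator T Q fun _ _ => 0) :=
        le_supDistTuple hbdd i ht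
    _ ≤ K * supDistTuple T (fun _ _ => -1) (fun _ _ => 0) :=
        hLip _ _ (fun _ => continuous_const.cadlag) (fun _ => continuous_const.cadlag)
    _ = K := by rw [supDistTuple_const hT]; norm_num

theorem RegulatorLipschitzWith.neumannVec_le (hLip : RegulatorLipschitzWith T Q K)
    (hT : 0 ≤ T) (hQ : Substochastic Q) (m : ℕ) (i : Fin d) : neumannVec Q m i ≤ K := by
  have h0 : (0 : ℝ) ∈ Icc 0 T := ⟨le_rfl, hT⟩
  have hne := exists_feasible_of_forall_le (T := T) (ξ := fun _ _ => -1) hQ zero_le_one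
    fun _ _ _ => le_rfl
  exact (le_regulator hne fun ζ hζ => neumannVec_le_of_feasible_neg_one hQ.1 hζ h0 m i).trans
    (hLip.regulator_neg_one_le hT hQ i h0)

end LipschitzBound

section Comparison

variable {T : ℝ} {d : ℕ} {Q : Matrix (Fin d) (Fin d) ℝ} {ξsrc ξtgt ζ : Fin d → ℝ → ℝ}
  {θ : ℝ → ℝ} {δ C : ℝ} {c : Fin d → ℝ}

theorem Feasible.slidingAverage_comp_add (hζ : Feasible T Q ξsrc ζ) (hθ : Monotone θ)
    (hθT : ∀ u, θ u ∈ Icc 0 T) (hδ : 0 < δ)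
    (hest : ∀ s ∈ Icc 0 T, ∀ u ∈ Icc (s - δ) s, ∀ j, ξsrc j (θ u) ≤ ξtgt j s + C)
    (hc0 : 0 ≤ c) (hc : ∀ j, C ≤ (refMatrix Q *ᵥ c) j) :
    Feasible T Q ξtgt fun j s => slidingAverage (fun u => ζ j (θ u)) δ s + c j := by
  have hmono : ∀ j, Monotone fun u => ζ j (θ u) := fun j u v huv =>
    (hζ.1 j).2.1 (hθT u) (hθT v) (hθ huv)
  have hint : ∀ j a b, IntervalIntegrable (fun u => ζ j (θ u)) volume a b := fun j _ _ =>
    (hmono j).intervalIntegrable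
  refine ⟨fun j => ⟨?_, ?_, ?_⟩, fun s hs j => ?_⟩
  · exact ((continuous_slidingAverage (hint j) δ).add continuous_const).cadlag
  · exact ((monotone_slidingAverage (hmono j) hδ.le).add_const (c j)).monotoneOn _
  · exact add_nonneg (le_slidingAverage hδ (hint j _ _) fun u _ => hζ.nonneg j (hθT u)) (hc0 j)
  have hsum_int : IntervalIntegrable (fun u => ∑ k, refMatrix Q j k * ζ k (θ u)) volume
      (s - δ) s := by
    have h := IntervalIntegrable.sum Finset.univ fun k _ => (hint k (s - δ) s).const_mul
      (refMatrix Q j k)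
    rwa [Finset.sum_fn] at h
  have hlow : -(ξtgt j s + C) ≤
      slidingAverage (fun u => ∑ k, refMatrix Q j k * ζ k (θ u)) δ s :=
    le_slidingAverage hδ hsum_int fun u hu => by
      linarith [hζ.2 (θ u) (hθT u) j, hest s hs u hu j]
  rw [slidingAverage_sum_mul _ _ fun k _ => hint k _ _] at hlow
  have hsplit : ∑ k, refMatrix Q j k * (slidingAverage (fun u => ζ k (θ u)) δ s + c k) =
      ∑ k, refMatrix Q j k * slidingAverage (fun u => ζ k (θ u)) δ s +
        (refMatrix Q *ᵥ c) j := by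
    simp only [mul_add, Finset.sum_add_distrib]
    rfl
  rw [hsplit]
  linarith [hc j]

theorem regulator_le_regulator_add_of_comp (hsrc : ∃ ζ, Feasible T Q ξsrc ζ)
    (hθ : Monotone θ) (hθT : ∀ u, θ u ∈ Icc 0 T) (hδ : 0 < δ)
    (hest : ∀ s ∈ Icc 0 T, ∀ u ∈ Icc (s - δ) s, ∀ j, ξsrc j (θ u) ≤ ξtgt j s + C)
    (hc0 : 0 ≤ c) (hc : ∀ j, C ≤ (refMatrix Q *ᵥ c) j) {t t' : ℝ} (ht : t ∈ Icc 0 T)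
    (ht' : t' ∈ Icc 0 T) (hθt : θ t' ≤ t) (i : Fin d) :
    regulator T Q ξtgt i t' ≤ regulator T Q ξsrc i t + c i := by
  rw [← sub_le_iff_le_add]
  refine le_regulator hsrc fun ζ hζ => ?_
  have hmono : Monotone fun u => ζ i (θ u) := fun u v huv =>
    (hζ.1 i).2.1 (hθT u) (hθT v) (hθ huv)
  calc regulator T Q ξtgt i t' - c i
      ≤ slidingAverage (fun u => ζ i (θ u)) δ t' :=
        sub_le_iff_le_add.2 (regulator_le (hζ.slidingAverage_comp_add hθ hθT hδ hest hc0 hc) i ht')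
    _ ≤ ζ i (θ t') := slidingAverage_le hδ hmono.intervalIntegrable fun u hu => hmono hu.2
    _ ≤ ζ i t := (hζ.1 i).2.1 (hθT t') ht hθt

theorem regulator_le_regulator_add_of_delayed {K : ℝ} (hT : 0 ≤ T) (hQ : Substochastic Q)
    (hS : ∀ m i, neumannVec Q m i ≤ K) (hsrc : ∃ ζ, Feasible T Q ξsrc ζ) {W L : ℝ}
    (hW : 0 ≤ W) (hC : 0 ≤ C)
    (hdelay : ∀ δ > 0, ∀ s ∈ Icc 0 T, ∀ r ∈ Icc 0 T, s - W - 2 * δ ≤ r →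
      r ≤ max 0 (s - W - δ) → ∀ j, ξsrc j r ≤ ξtgt j s + C + L * δ)
    {t t' : ℝ} (ht : t ∈ Icc 0 T) (ht' : t' ∈ Icc 0 T) (htt' : t' ≤ t + W) (i : Fin d) :
    regulator T Q ξtgt i t' ≤ regulator T Q ξsrc i t + C * K := by
  suffices h : ∀ γ > C, regulator T Q ξtgt i t' ≤ regulator T Q ξsrc i t + γ * K from
    ge_of_tendsto ((Continuous.tendsto (by fun_prop) C).mono_left nhdsWithin_le_nhds)
      (eventually_nhdsWithin_of_forall (s := Ioi C) h)
  intro γ hγ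
  have hsmall : ∀ᶠ δ in 𝓝[>] (0 : ℝ), C + L * δ < γ := by
    have h : Tendsto (fun δ => C + L * δ) (𝓝[>] 0) (𝓝 (C + L * 0)) :=
      (Continuous.tendsto (by fun_prop) 0).mono_left nhdsWithin_le_nhds
    rw [mul_zero, add_zero] at h
    exact h.eventually (gt_mem_nhds hγ)
  obtain ⟨δ, hδγ, hδ⟩ := (hsmall.and self_mem_nhdsWithin).exists
  have hδ : 0 < δ := hδ
  obtain ⟨m, hm⟩ := exists_le_refMatrix_mulVec_smul_neumannVec hQ.2.2.2 (hC.trans_lt hγ) hδγ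
  let θ : ℝ → ℝ := fun u => max 0 (min T (u - W - δ))
  have hθ : Monotone θ := fun u v huv => max_le_max le_rfl (min_le_min le_rfl (by linarith))
  have hθT : ∀ u, θ u ∈ Icc 0 T := fun u => ⟨le_max_left _ _, max_le hT (min_le_left _ _)⟩
  have hest : ∀ s ∈ Icc 0 T, ∀ u ∈ Icc (s - δ) s, ∀ j,
      ξsrc j (θ u) ≤ ξtgt j s + (C + L * δ) := fun s hs u hu j => by
    rw [← add_assoc]
    refine hdelay δ hδ s hs (θ u) (hθT u) ?_ ?_ j
    · exact le_max_of_le_right (le_min (by linarith [hs.2, hu.2]) (by linarith [hu.1]))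
    · exact max_le_max le_rfl ((min_le_right _ _).trans (by linarith [hu.2]))
  have hθt : θ t' ≤ t := max_le ht.1 ((min_le_right _ _).trans (by linarith))
  have hγ0 : 0 ≤ γ := hC.trans hγ.le
  calc regulator T Q ξtgt i t' ≤ regulator T Q ξsrc i t + (γ • neumannVec Q m) i :=
        regulator_le_regulator_add_of_comp hsrc hθ hθT hδ hest
          (smul_nonneg hγ0 (neumannVec_nonneg hQ.1 m)) hm ht ht' hθt i
    _ ≤ regulator T Q ξsrc i t + γ * K := by
        rw [Pi.smul_apply, smul_eq_mul]
        gcongr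
        exact hS m i

end Comparison

section TimeDeformation

variable {T β B W δ s r t : ℝ} {f w : ℝ → ℝ}

theorem DBeta.le_add_mul_sub (hf : DBeta T β f) (hB : |β| ≤ B) {u v : ℝ} (hu : u ∈ Icc 0 T)
    (hv : v ∈ Icc 0 T) (huv : u ≤ v) : f u ≤ f v + B * (v - u) := by
  have hdrift : f u - β * u ≤ f v - β * v := hf.2.2 hu hv huv
  have hslope : -β * (v - u) ≤ B * (v - u) :=
    mul_le_mul_of_nonneg_right ((neg_le_abs β).trans hB) (sub_nonneg.2 huv)
  linarith

theorem DBeta.neg_mul_le (hf : DBeta T β f) (hB : |β| ≤ B) (ht : t ∈ Icc 0 T) :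
    -(B * T) ≤ f t := by
  have h := hf.le_add_mul_sub hB ⟨le_rfl, ht.1.trans ht.2⟩ ht ht.1
  have hBt : B * (t - 0) ≤ B * T :=
    mul_le_mul_of_nonneg_left (by linarith [ht.2]) ((abs_nonneg β).trans hB)
  linarith [hf.2.1]

theorem abs_sub_le_supTimeDev (hw : MapsTo w (Icc 0 T) (Icc 0 T)) (ht : t ∈ Icc 0 T) :
    |w t - t| ≤ supTimeDev T w := by
  refine le_csSup ⟨T, ?_⟩ ⟨t, ht, rfl⟩
  rintro _ ⟨s, hs, rfl⟩
  exact abs_le.2 ⟨by linarith [(hw hs).1, hs.2], by linarith [(hw hs).2, hs.1]⟩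

theorem DBeta.le_comp_add (hf : DBeta T β f) (hB : |β| ≤ B) (hw : MapsTo w (Icc 0 T) (Icc 0 T))
    (hW : ∀ s ∈ Icc 0 T, |w s - s| ≤ W) (hδ : 0 ≤ δ) (hs : s ∈ Icc 0 T) (hr : r ∈ Icc 0 T)
    (hsr : s - W - 2 * δ ≤ r) (hrs : r ≤ max 0 (s - W - δ)) :
    f r ≤ f (w s) + 2 * B * W + 2 * B * δ := by
  have hws := abs_le.1 (hW s hs)
  have hrw : r ≤ w s := hrs.trans (max_le (hw hs).1 (by linarith))
  have hgap : B * (w s - r) ≤ B * (2 * W + 2 * δ) :=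
    mul_le_mul_of_nonneg_left (by linarith) ((abs_nonneg β).trans hB)
  linarith [hf.le_add_mul_sub hB hr (hw hs) hrw]

theorem DBeta.comp_le_add (hf : DBeta T β f) (hB : |β| ≤ B) (hw : MapsTo w (Icc 0 T) (Icc 0 T))
    (hw0 : w 0 = 0) (hW : ∀ s ∈ Icc 0 T, |w s - s| ≤ W) (hs : s ∈ Icc 0 T) (hr : r ∈ Icc 0 T)
    (hsr : s - W - 2 * δ ≤ r) (hrs : r ≤ max 0 (s - W - δ)) :
    f (w r) ≤ f s + 2 * B * W + 2 * B * δ := by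
  have hwr := abs_le.1 (hW r hr)
  have hws : w r ≤ s := by
    rcases le_max_iff.1 hrs with hr0 | hr'
    · rw [le_antisymm hr0 hr.1, hw0]
      exact hs.1
    · linarith
  have hgap : B * (s - w r) ≤ B * (2 * W + 2 * δ) :=
    mul_le_mul_of_nonneg_left (by linarith) ((abs_nonneg β).trans hB)
  linarith [hf.le_add_mul_sub hB (hw hr) hs hws]

theorem inf'_mem_Icc {ι : Type*} {s : Finset ι} (hs : s.Nonempty) {f : ι → ℝ} {a b : ℝ}
    (h : ∀ j ∈ s, f j ∈ Icc a b) : s.inf' hs f ∈ Icc a b :=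
  ⟨Finset.le_inf' _ _ fun j hj => (h j hj).1,
    (Finset.inf'_le _ hs.choose_spec).trans (h _ hs.choose_spec).2⟩

theorem sup'_mem_Icc {ι : Type*} {s : Finset ι} (hs : s.Nonempty) {f : ι → ℝ} {a b : ℝ}
    (h : ∀ j ∈ s, f j ∈ Icc a b) : s.sup' hs f ∈ Icc a b :=
  ⟨(h _ hs.choose_spec).1.trans (Finset.le_sup' _ hs.choose_spec),
    Finset.sup'_le _ _ fun j hj => (h j hj).2⟩

theorem sub_le_inf'_of_abs_sub_le {ι : Type*} {s : Finset ι} (hs : s.Nonempty) {f : ι → ℝ}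
    (h : ∀ j ∈ s, |f j - t| ≤ W) : t - W ≤ s.inf' hs f :=
  Finset.le_inf' _ _ fun j hj => by linarith [(abs_le.1 (h j hj)).1]

theorem sup'_le_add_of_abs_sub_le {ι : Type*} {s : Finset ι} (hs : s.Nonempty) {f : ι → ℝ}
    (h : ∀ j ∈ s, |f j - t| ≤ W) : s.sup' hs f ≤ t + W :=
  Finset.sup'_le _ _ fun j hj => by linarith [(abs_le.1 (h j hj)).2]

end TimeDeformation

theorem regulator_multi_time_deformation_bounds_general
    (T : ℝ) (hT : 0 < T) (d : ℕ) (hd : 0 < d) (β : Fin d → ℝ)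
    (Q : Matrix (Fin d) (Fin d) ℝ) (hQ : Substochastic Q)
    (K : ℝ)
    (hLip : ∀ ξ ζ : Fin d → ℝ → ℝ, (∀ i, Cadlag T (ξ i)) → (∀ i, Cadlag T (ζ i)) →
      supDistTuple T (regulator T Q ξ) (regulator T Q ζ) ≤ K * supDistTuple T ξ ζ)
    (w : Fin d → ℝ → ℝ)
    (hwmap : ∀ i, Set.MapsTo (w i) (Set.Icc 0 T) (Set.Icc 0 T))
    (hw0 : ∀ i, w i 0 = 0)
    (ξ : Fin d → ℝ → ℝ) (hξ : ∀ i, DBeta T (β i) (ξ i))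
    (normβ : ℝ)
    (hnormβ : normβ = Finset.univ.sup' (⟨⟨0, hd⟩, Finset.mem_univ _⟩ :
        (Finset.univ : Finset (Fin d)).Nonempty) fun i => |β i|)
    (wdev : ℝ)
    (hwdev : wdev = Finset.univ.sup' (⟨⟨0, hd⟩, Finset.mem_univ _⟩ :
        (Finset.univ : Finset (Fin d)).Nonempty) fun i => supTimeDev T (w i)) :
    (∀ i, ∀ t ∈ Set.Icc (0:ℝ) T,
      regulator T Q (fun i t => ξ i (w i t)) i t ≤
        regulator T Q ξ i (Finset.univ.inf' (⟨⟨0, hd⟩, Finset.mem_univ _⟩ :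
            (Finset.univ : Finset (Fin d)).Nonempty) (fun j => w j t)) +
          2 * K * normβ * wdev) ∧
    (∀ i, ∀ t ∈ Set.Icc (0:ℝ) T,
      regulator T Q ξ i (Finset.univ.sup' (⟨⟨0, hd⟩, Finset.mem_univ _⟩ :
          (Finset.univ : Finset (Fin d)).Nonempty) (fun j => w j t)) ≤
        regulator T Q (fun i t => ξ i (w i t)) i t + 2 * K * normβ * wdev) := by
  have hne : (Finset.univ : Finset (Fin d)).Nonempty := ⟨⟨0, hd⟩, Finset.mem_univ _⟩
  have hβ : ∀ j, |β j| ≤ normβ := fun j =>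
    hnormβ ▸ Finset.le_sup' (fun i => |β i|) (Finset.mem_univ j)
  have hW : ∀ j, ∀ s ∈ Icc 0 T, |w j s - s| ≤ wdev := fun j s hs =>
    (abs_sub_le_supTimeDev (hwmap j) hs).trans
      (hwdev ▸ Finset.le_sup' (fun i => supTimeDev T (w i)) (Finset.mem_univ j))
  have hB : 0 ≤ normβ := (abs_nonneg _).trans (hβ ⟨0, hd⟩)
  have hW0 : 0 ≤ wdev := (abs_nonneg _).trans (hW ⟨0, hd⟩ 0 ⟨le_rfl, hT.le⟩)
  have hS := RegulatorLipschitzWith.neumannVec_le hLip hT.le hQ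
  have hξlow : ∀ j, ∀ s ∈ Icc 0 T, -(normβ * T) ≤ ξ j s := fun j s hs =>
    (hξ j).neg_mul_le (hβ j) hs
  refine ⟨fun i t ht => ?_, fun i t ht => ?_⟩
  · have h := regulator_le_regulator_add_of_delayed hT.le hQ hS
      (exists_feasible_of_forall_le hQ (by positivity) hξlow) hW0 (by positivity)
      (fun δ hδ s hs r hr hsr hrs j =>
        (hξ j).le_comp_add (hβ j) (hwmap j) (hW j) hδ.le hs hr hsr hrs)
      (inf'_mem_Icc hne fun j _ => hwmap j ht) ht
      (by linarith [sub_le_inf'_of_abs_sub_le hne fun j _ => hW j t ht]) i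
    linarith
  · have h := regulator_le_regulator_add_of_delayed hT.le hQ hS
      (exists_feasible_of_forall_le hQ (by positivity) fun j s hs => hξlow j _ (hwmap j hs))
      hW0 (by positivity)
      (fun δ _ s hs r hr hsr hrs j =>
        (hξ j).comp_le_add (hβ j) (hwmap j) (hw0 j) (hW j) hs hr hsr hrs)
      ht (sup'_mem_Icc hne fun j _ => hwmap j ht)
      (sup'_le_add_of_abs_sub_le hne fun j _ => hW j t ht) i
    linarith

/-- If the regulator map `ψ` is `K`-Lipschitz in the uniform metric, then
for coordinatewise time deformations `w⁽ⁱ⁾` with pointwise min `w̌` and max `ŵ`, and any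
`ξ ∈ ∏ D^{β_i}[0,T]`: (i) `ψ(ξ∘w)(t) ≤ ψ(ξ)(w̌(t)) + 2K‖β‖_∞‖w - e‖_∞` and
(ii) `ψ(ξ)(ŵ(t)) ≤ ψ(ξ∘w)(t) + 2K‖β‖_∞‖w - e‖_∞`, componentwise on `[0,T]`. -/
theorem regulator_multi_time_deformation_bounds
    (T : ℝ) (hT : 0 < T) (d : ℕ) (hd : 0 < d) (β : Fin d → ℝ)
    (Q : Matrix (Fin d) (Fin d) ℝ) (hQ : Substochastic Q)
    (K : ℝ) (hK : 0 < K)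
    (hLip : ∀ ξ ζ : Fin d → ℝ → ℝ, (∀ i, Cadlag T (ξ i)) → (∀ i, Cadlag T (ζ i)) →
      supDistTuple T (regulator T Q ξ) (regulator T Q ζ) ≤ K * supDistTuple T ξ ζ)
    (w : Fin d → ℝ → ℝ) (hw : ∀ i, MonotoneOn (w i) (Set.Icc 0 T))
    (hwmap : ∀ i, Set.MapsTo (w i) (Set.Icc 0 T) (Set.Icc 0 T))
    (hw0 : ∀ i, w i 0 = 0) (hwT : ∀ i, w i T = T)
    (ξ : Fin d → ℝ → ℝ) (hξ : ∀ i, DBeta T (β i) (ξ i))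
    (normβ : ℝ)
    (hnormβ : normβ = Finset.univ.sup' (⟨⟨0, hd⟩, Finset.mem_univ _⟩ :
        (Finset.univ : Finset (Fin d)).Nonempty) fun i => |β i|)
    (wdev : ℝ)
    (hwdev : wdev = Finset.univ.sup' (⟨⟨0, hd⟩, Finset.mem_univ _⟩ :
        (Finset.univ : Finset (Fin d)).Nonempty) fun i => supTimeDev T (w i)) :
    (∀ i, ∀ t ∈ Set.Icc (0:ℝ) T,
      regulator T Q (fun i t => ξ i (w i t)) i t ≤
        regulator T Q ξ i (Finset.univ.inf' (⟨⟨0, hd⟩, Finset.mem_univ _⟩ :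
            (Finset.univ : Finset (Fin d)).Nonempty) (fun j => w j t)) +
          2 * K * normβ * wdev) ∧
    (∀ i, ∀ t ∈ Set.Icc (0:ℝ) T,
      regulator T Q ξ i (Finset.univ.sup' (⟨⟨0, hd⟩, Finset.mem_univ _⟩ :
          (Finset.univ : Finset (Fin d)).Nonempty) (fun j => w j t)) ≤
        regulator T Q (fun i t => ξ i (w i t)) i t + 2 * K * normβ * wdev) :=
  regulator_multi_time_deformation_bounds_general T hT d hd β Q hQ K hLip w hwmap hw0 ξ hξ normβ
    hnormβ wdev hwdev
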